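/- Let w(x,t) = inf_{τ∈[0,t), y∈ℝⁿ} [(t−τ)·L̄((x−y)/(t−τ)) + f(y,τ)]. Then for every x ∈ ℝⁿ the map t ↦ w(x,t) is Lipschitz on [0,∞) with constant C = max{|L̄(0)|, ‖Dg‖_∞²/2 + K₀}. -/

import Mathlib

open NNReal Set

/-!
The value at time `t` is an infimum over straight paths that start at a point `y` at a time
`τ ∈ [0, t)` and end at `x` at time `t`. Moving the final time from `a` to `b > a` costs at
most `(b - a) L̄(0)`: a path starting at `τ > 0` is delayed by `b - a` (for `τ > 0` the cost `f`
does not depend on time), and one starting at `τ = 0` is slowed down, which by convexity of the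
perspective `s ↦ s L̄(u / s)` costs at most `(b - a) L̄(0)`. Conversely, a path for time `b` is
either advanced by `b - a` (`f` is nondecreasing in time) or, if it would then start before
time `0`, replaced by its final piece of duration `a`, started at time `0`. The piece of
duration `s` that is cut off covers a distance `s |v|`, over which `g` changes by at most
`Lg s |v| ≤ s (L̄(v) + Lg² / 2 + K₀)` because `L̄(v) ≥ |v|² / 2 - K₀`.
-/

theorem sq_norm_div_two_sub_le_iSup_inner_sub {E : Type*} [NormedAddCommGroup E]
    [InnerProductSpace ℝ E] {H : E → ℝ} {K : ℝ}
    (hH : ∀ p, ‖p‖ ^ 2 / 2 - K ≤ H p ∧ H p ≤ ‖p‖ ^ 2 / 2 + K) (v : E) :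
    ‖v‖ ^ 2 / 2 - K ≤ ⨆ p, (inner ℝ p v - H p) := by
  have hbdd : BddAbove (range fun p => inner ℝ p v - H p) := by
    refine ⟨‖v‖ ^ 2 / 2 + K, ?_⟩
    rintro _ ⟨p, rfl⟩
    nlinarith [(hH p).1, real_inner_le_norm p v, sq_nonneg (‖p‖ - ‖v‖)]
  refine le_ciSup_of_le hbdd v ?_
  linarith [(hH v).2, real_inner_self_eq_norm_sq v]

theorem monotoneOn_Ici_zero_of_step {φ : ℝ → ℝ} {u v : ℝ} (h0 : φ 0 = u)
    (hpos : ∀ τ, 0 < τ → φ τ = v) (huv : u ≤ v) : MonotoneOn φ (Ici 0) := by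
  intro τ hτ τ' hτ' hle
  rcases (mem_Ici.1 hτ).eq_or_lt with rfl | hτpos
  · rcases (mem_Ici.1 hτ').eq_or_lt with rfl | hτ'pos
    · rfl
    · rw [h0, hpos τ' hτ'pos]
      exact huv
  · rw [hpos τ hτpos, hpos τ' (hτpos.trans_le hle)]

section

variable {E : Type*} [NormedAddCommGroup E] [NormedSpace ℝ E]

theorem LipschitzWith.apply_add_smul_le {g : E → ℝ} {Lg : ℝ≥0} (hg : LipschitzWith Lg g)
    {L : E → ℝ} {K : ℝ} (hL : ∀ v, ‖v‖ ^ 2 / 2 - K ≤ L v) {s : ℝ} (hs : 0 ≤ s) (z v : E) :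
    g (z + s • v) ≤ g z + s * L v + s * ((Lg : ℝ) ^ 2 / 2 + K) := by
  have hlip : g (z + s • v) - g z ≤ s * ((Lg : ℝ) * ‖v‖) := by
    have := (le_abs_self _).trans (hg.dist_le_mul (z + s • v) z)
    rwa [dist_self_add_left, norm_smul, Real.norm_of_nonneg hs, mul_left_comm] at this
  have young : (Lg : ℝ) * ‖v‖ ≤ (Lg : ℝ) ^ 2 / 2 + ‖v‖ ^ 2 / 2 := by
    nlinarith [sq_nonneg ((Lg : ℝ) - ‖v‖)]
  nlinarith [mul_le_mul_of_nonneg_left young hs, mul_le_mul_of_nonneg_left (hL v) hs]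

-- The perspective `s ↦ s * L (s⁻¹ • u)` of `L` grows with slope at most `L 0`.
theorem ConvexOn.mul_apply_inv_smul_le {L : E → ℝ} (hL : ConvexOn ℝ univ L) {a b : ℝ}
    (ha : 0 < a) (hab : a ≤ b) (u : E) :
    b * L (b⁻¹ • u) ≤ a * L (a⁻¹ • u) + (b - a) * L 0 := by
  have hb : 0 < b := ha.trans_le hab
  have hsplit : b⁻¹ • u = (a / b) • (a⁻¹ • u) + (1 - a / b) • (0 : E) := by
    rw [smul_zero, add_zero, smul_smul]
    congr 1
    field_simp
  have hconv := hL.2 (mem_univ (a⁻¹ • u)) (mem_univ 0) (div_nonneg ha.le hb.le)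
    (sub_nonneg.2 ((div_le_one hb).2 hab)) (add_sub_cancel _ _)
  rw [← hsplit, smul_eq_mul, smul_eq_mul] at hconv
  calc b * L (b⁻¹ • u) ≤ b * (a / b * L (a⁻¹ • u) + (1 - a / b) * L 0) :=
        mul_le_mul_of_nonneg_left hconv hb.le
    _ = a * L (a⁻¹ • u) + (b - a) * L 0 := by field_simp

def hopfLaxSet (L : E → ℝ) (f : E → ℝ → ℝ) (x : E) (t : ℝ) : Set ℝ :=
  {r | ∃ (τ : ℝ) (y : E), 0 ≤ τ ∧ τ < t ∧ r = (t - τ) * L ((t - τ)⁻¹ • (x - y)) + f y τ}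

noncomputable def hopfLax (L : E → ℝ) (f : E → ℝ → ℝ) (x : E) (t : ℝ) : ℝ :=
  sInf (hopfLaxSet L f x t)

theorem hopfLax_le {L : E → ℝ} {f : E → ℝ → ℝ} {x : E} {t : ℝ}
    (hbdd : BddBelow (hopfLaxSet L f x t)) {τ : ℝ} (hτ : 0 ≤ τ) (hτt : τ < t) (y : E) :
    hopfLax L f x t ≤ (t - τ) * L ((t - τ)⁻¹ • (x - y)) + f y τ :=
  csInf_le hbdd ⟨τ, y, hτ, hτt, rfl⟩

theorem le_hopfLax {L : E → ℝ} {f : E → ℝ → ℝ} {x : E} {t m : ℝ} (ht : 0 < t)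
    (h : ∀ τ y, 0 ≤ τ → τ < t → m ≤ (t - τ) * L ((t - τ)⁻¹ • (x - y)) + f y τ) :
    m ≤ hopfLax L f x t :=
  le_csInf ⟨_, 0, x, le_rfl, ht, rfl⟩ fun _ ⟨τ, y, hτ, hτt, hr⟩ => hr ▸ h τ y hτ hτt

theorem bddBelow_hopfLaxSet {L : E → ℝ} {f : E → ℝ → ℝ} {g : E → ℝ} {Lg : ℝ≥0} {K : ℝ}
    (hL : ∀ v, ‖v‖ ^ 2 / 2 - K ≤ L v) (hK : 0 ≤ K) (hg : LipschitzWith Lg g)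
    (hf0 : ∀ y, f y 0 = g y) (hmono : ∀ y, MonotoneOn (f y) (Ici 0)) (x : E) (t : ℝ) :
    BddBelow (hopfLaxSet L f x t) := by
  refine ⟨g x - t * ((Lg : ℝ) ^ 2 / 2 + K), ?_⟩
  rintro _ ⟨τ, y, hτ, hτt, rfl⟩
  have hs : 0 ≤ t - τ := by linarith
  have hx := hg.apply_add_smul_le hL hs y ((t - τ)⁻¹ • (x - y))
  rw [smul_inv_smul₀ (sub_pos.2 hτt).ne', add_sub_cancel] at hx
  have hgf : g y ≤ f y τ := hf0 y ▸ hmono y self_mem_Ici hτ hτ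
  nlinarith [mul_nonneg hτ (by positivity : (0 : ℝ) ≤ (Lg : ℝ) ^ 2 / 2 + K)]

structure IsHopfLaxValue (L : E → ℝ) (f : E → ℝ → ℝ) (g : E → ℝ) (w : E → ℝ → ℝ) : Prop where
  apply_zero : ∀ x, w x 0 = g x
  apply_of_pos : ∀ x t, 0 < t → w x t = hopfLax L f x t

namespace IsHopfLaxValue

variable {L : E → ℝ} {f : E → ℝ → ℝ} {g : E → ℝ} {w : E → ℝ → ℝ}

theorem apply_le_straight (hw : IsHopfLaxValue L f g w) (hf0 : ∀ y, f y 0 = g y)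
    (hbdd : ∀ x t, BddBelow (hopfLaxSet L f x t)) {a : ℝ} (ha : 0 ≤ a) (x v : E) :
    w x a ≤ a * L v + g (x - a • v) := by
  rcases ha.eq_or_lt with rfl | ha
  · simp [hw.apply_zero]
  · have h := hopfLax_le (hbdd x a) le_rfl ha (x - a • v)
    rw [sub_zero, sub_sub_cancel, inv_smul_smul₀ ha.ne', hf0] at h
    exact hw.apply_of_pos x a ha ▸ h

theorem apply_sub_le_of_convexOn (hw : IsHopfLaxValue L f g w) (hf0 : ∀ y, f y 0 = g y)
    (hshift : ∀ y τ s, 0 < τ → 0 < s → f y (τ + s) = f y τ)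
    (hbdd : ∀ x t, BddBelow (hopfLaxSet L f x t)) (hL : ConvexOn ℝ univ L)
    {c : ℝ} (hc : 0 ≤ c) (hL0 : L 0 ≤ c) {a b : ℝ} (ha : 0 ≤ a) (hab : a < b) (x : E) :
    w x b - w x a ≤ c * (b - a) := by
  have hb : 0 < b := ha.trans_lt hab
  have hL0c : (b - a) * L 0 ≤ (b - a) * c := mul_le_mul_of_nonneg_left hL0 (by linarith)
  rcases ha.eq_or_lt with rfl | ha
  · have h := hw.apply_le_straight hf0 hbdd hb.le x 0
    rw [smul_zero, sub_zero, ← hw.apply_zero] at h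
    linarith
  rw [hw.apply_of_pos x a ha, sub_le_iff_le_add, ← sub_le_iff_le_add']
  refine le_hopfLax ha fun τ y hτ hτa => ?_
  rcases hτ.eq_or_lt with rfl | hτ
  · have h := hw.apply_le_straight hf0 hbdd hb.le x (b⁻¹ • (x - y))
    rw [smul_inv_smul₀ hb.ne', sub_sub_cancel, ← hf0] at h
    have hpersp := hL.mul_apply_inv_smul_le ha hab.le (x - y)
    rw [sub_zero]
    linarith
  · have h := hopfLax_le (hbdd x b) (by linarith : 0 ≤ τ + (b - a)) (by linarith) y
    rw [← hw.apply_of_pos x b hb, hshift y τ (b - a) hτ (by linarith),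
      show b - (τ + (b - a)) = a - τ by ring] at h
    linarith [mul_nonneg (by linarith : 0 ≤ b - a) hc]

theorem apply_sub_le_of_lipschitzWith (hw : IsHopfLaxValue L f g w) (hf0 : ∀ y, f y 0 = g y)
    (hmono : ∀ y, MonotoneOn (f y) (Ici 0)) (hbdd : ∀ x t, BddBelow (hopfLaxSet L f x t))
    {Lg : ℝ≥0} {K : ℝ} (hg : LipschitzWith Lg g) (hL : ∀ v, ‖v‖ ^ 2 / 2 - K ≤ L v)
    {c : ℝ} (hc : 0 ≤ c) (hLgK : (Lg : ℝ) ^ 2 / 2 + K ≤ c) {a b : ℝ} (ha : 0 ≤ a) (hab : a < b)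
    (x : E) : w x a - w x b ≤ c * (b - a) := by
  have hb : 0 < b := ha.trans_lt hab
  rw [hw.apply_of_pos x b hb, sub_le_comm]
  refine le_hopfLax hb fun τ y hτ hτb => ?_
  rcases le_or_gt (b - a) τ with hτ' | hτ'
  · have h := hopfLax_le (hbdd x a) (sub_nonneg.2 hτ') (by linarith) y
    rw [← hw.apply_of_pos x a (by linarith), show a - (τ - (b - a)) = b - τ by ring] at h
    have hf : f y (τ - (b - a)) ≤ f y τ :=
      hmono y (sub_nonneg.2 hτ' : τ - (b - a) ∈ Ici 0) hτ (by linarith)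
    linarith [mul_nonneg (by linarith : 0 ≤ b - a) hc]
  · set v := (b - τ)⁻¹ • (x - y)
    have hstart : x - a • v = y + (b - τ - a) • v := by
      rw [sub_smul, smul_inv_smul₀ (by linarith : b - τ ≠ 0)]
      abel
    have hstraight := hw.apply_le_straight hf0 hbdd ha x v
    have hcut := hg.apply_add_smul_le hL (by linarith : 0 ≤ b - τ - a) y v
    have hgf : g y ≤ f y τ := hf0 y ▸ hmono y self_mem_Ici hτ hτ
    rw [hstart] at hstraight
    nlinarith [mul_le_mul_of_nonneg_left hLgK (by linarith : 0 ≤ b - τ - a)]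

end IsHopfLaxValue

end

theorem stmt_7_general (n : ℕ) (Hbar Lbar : EuclideanSpace ℝ (Fin n) → ℝ) (K₀ : ℝ)
    (hHb : ∀ p, ‖p‖ ^ 2 / 2 - K₀ ≤ Hbar p ∧ Hbar p ≤ ‖p‖ ^ 2 / 2 + K₀)
    (hL : ∀ v, Lbar v = ⨆ p : EuclideanSpace ℝ (Fin n), ((inner ℝ p v : ℝ) - Hbar p))
    (hLconv : ConvexOn ℝ Set.univ Lbar)
    (g bbar : EuclideanSpace ℝ (Fin n) → ℝ)
    (Lg : ℝ≥0) (hglip : LipschitzWith Lg g)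
    (hgb : ∀ x, g x ≤ bbar x)
    (f : EuclideanSpace ℝ (Fin n) → ℝ → ℝ)
    (hf0 : ∀ y, f y 0 = g y) (hfp : ∀ y τ, 0 < τ → f y τ = bbar y)
    (w : EuclideanSpace ℝ (Fin n) → ℝ → ℝ)
    (hw0 : ∀ x, w x 0 = g x)
    (hw : ∀ x t, 0 < t → w x t =
      sInf {r | ∃ (τ : ℝ) (y : EuclideanSpace ℝ (Fin n)), 0 ≤ τ ∧ τ < t ∧
        r = (t - τ) * Lbar ((t - τ)⁻¹ • (x - y)) + f y τ})
    (C : ℝ) (hC : C = max |Lbar 0| ((Lg : ℝ) ^ 2 / 2 + K₀)) :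
    ∀ (x : EuclideanSpace ℝ (Fin n)) (t₁ t₂ : ℝ), 0 ≤ t₁ → 0 ≤ t₂ →
      |w x t₁ - w x t₂| ≤ C * |t₁ - t₂| := by
  have hK : 0 ≤ K₀ := by linarith [hHb 0]
  have hLlb (v) : ‖v‖ ^ 2 / 2 - K₀ ≤ Lbar v := hL v ▸ sq_norm_div_two_sub_le_iSup_inner_sub hHb v
  have hmono (y) : MonotoneOn (f y) (Ici 0) :=
    monotoneOn_Ici_zero_of_step (hf0 y) (fun τ => hfp y τ) (hgb y)
  have hshift (y τ s) (hτ : 0 < τ) (hs : 0 < s) : f y (τ + s) = f y τ := by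
    rw [hfp y τ hτ, hfp y _ (add_pos hτ hs)]
  have hbdd := bddBelow_hopfLaxSet hLlb hK hglip hf0 hmono
  have hw' : IsHopfLaxValue Lbar f g w := ⟨hw0, hw⟩
  have hC0 : 0 ≤ C := hC ▸ (abs_nonneg _).trans (le_max_left _ _)
  have hforward {a b : ℝ} (ha : 0 ≤ a) (hab : a < b) (x) : w x b - w x a ≤ C * (b - a) :=
    hw'.apply_sub_le_of_convexOn hf0 hshift hbdd hLconv hC0
      (hC ▸ (le_abs_self _).trans (le_max_left _ _)) ha hab x
  have hbackward {a b : ℝ} (ha : 0 ≤ a) (hab : a < b) (x) : w x a - w x b ≤ C * (b - a) :=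
    hw'.apply_sub_le_of_lipschitzWith hf0 hmono hbdd hglip hLlb hC0
      (hC ▸ le_max_right _ _) ha hab x
  intro x t₁ t₂ h₁ h₂
  rcases lt_trichotomy t₁ t₂ with h | rfl | h
  · rw [abs_sub_comm t₁, abs_of_pos (sub_pos.2 h), abs_sub_le_iff]
    exact ⟨hbackward h₁ h x, hforward h₁ h x⟩
  · simp
  · rw [abs_of_pos (sub_pos.2 h), abs_sub_le_iff]
    exact ⟨hforward h₂ h x, hbackward h₂ h x⟩

theorem stmt_7 (n : ℕ) (Hbar Lbar : EuclideanSpace ℝ (Fin n) → ℝ) (K₀ : ℝ) (hK₀ : 0 < K₀)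
    (hHc : Continuous Hbar) (hHconv : ConvexOn ℝ Set.univ Hbar)
    (hHb : ∀ p, ‖p‖ ^ 2 / 2 - K₀ ≤ Hbar p ∧ Hbar p ≤ ‖p‖ ^ 2 / 2 + K₀)
    (hL : ∀ v, Lbar v = ⨆ p : EuclideanSpace ℝ (Fin n), ((inner ℝ p v : ℝ) - Hbar p))
    (hLc : Continuous Lbar) (hLconv : ConvexOn ℝ Set.univ Lbar)
    (g bbar : EuclideanSpace ℝ (Fin n) → ℝ)
    (Lg : ℝ≥0) (hglip : LipschitzWith Lg g)
    (hgbd : ∃ M, ∀ x, |g x| ≤ M) (hbbd : ∃ M, ∀ x, |bbar x| ≤ M)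
    (hbuc : UniformContinuous bbar)
    (hgb : ∀ x, g x ≤ bbar x)
    (f : EuclideanSpace ℝ (Fin n) → ℝ → ℝ)
    (hf0 : ∀ y, f y 0 = g y) (hfp : ∀ y τ, 0 < τ → f y τ = bbar y)
    (w : EuclideanSpace ℝ (Fin n) → ℝ → ℝ)
    (hw0 : ∀ x, w x 0 = g x)
    (hw : ∀ x t, 0 < t → w x t =
      sInf {r | ∃ (τ : ℝ) (y : EuclideanSpace ℝ (Fin n)), 0 ≤ τ ∧ τ < t ∧
        r = (t - τ) * Lbar ((t - τ)⁻¹ • (x - y)) + f y τ})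
    (C : ℝ) (hC : C = max |Lbar 0| ((Lg : ℝ) ^ 2 / 2 + K₀)) :
    ∀ (x : EuclideanSpace ℝ (Fin n)) (t₁ t₂ : ℝ), 0 ≤ t₁ → 0 ≤ t₂ →
      |w x t₁ - w x t₂| ≤ C * |t₁ - t₂| :=
  stmt_7_general n Hbar Lbar K₀ hHb hL hLconv g bbar Lg hglip hgb f hf0 hfp w hw0 hw C hC
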